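/- Let N ≥ 1, s ∈ (0,1), p ∈ (1,∞), with s < 2(p−1)/p if p < 2, and let u ∈ C^{1,1}(ℝ^N). Then the function x ↦ (−Δ)^s_p u(x) is bounded and continuous on ℝ^N. -/

import Mathlib

/-
Write `J_p(t) = |t|^(p-2) t` (`signedPow p t`) and `δ± = u x - u (x ± z)`, so that the integrand
is `(J_p δ⁺ + J_p δ⁻) / ‖z‖^(N+sp)`. The numerator is at most `2 (2‖u‖_∞)^(p-1)`, which settles
`‖z‖ ≥ 1`. For small `z` the gradient being `K`-Lipschitz gives `|δ⁺ + δ⁻| ≤ 2K‖z‖²`, and the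
elementary inequalities `|J_p a + J_p b| ≤ 2|a+b|^(p-1)` (`p ≤ 2`) and
`|J_p a + J_p b| ≤ (p-1) max(|a|,|b|)^(p-2) |a+b|` (`p ≥ 2`) bound the numerator by
`C ‖z‖^β` with `β = min(p, 2(p-1)) > sp`. The resulting majorant of the integrand is
integrable and independent of `x`, so dominated convergence gives continuity and integrating it
gives the uniform bound.
-/

open MeasureTheory

/-- The normalizing constant `C_{N,s,p}` of the fractional `p`-Laplacian. -/
noncomputable def CNsp (N : ℕ) (s p : ℝ) : ℝ :=
  (s * p / 2) * (1 - s) * 2 ^ (2 * s - 1) / Real.pi ^ (((N : ℝ) - 1) / 2) *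
    (Real.Gamma (((N : ℝ) + s * p) / 2) / Real.Gamma ((p + 1) / 2)) * Real.Gamma (2 - s)

/-- The fractional `p`-Laplacian of a `C^{1,1}` function, via the absolutely
convergent symmetrized integral representation. -/
noncomputable def fracPLap (N : ℕ) (s p : ℝ) (u : EuclideanSpace ℝ (Fin N) → ℝ)
    (x : EuclideanSpace ℝ (Fin N)) : ℝ :=
  CNsp N s p * (1 / 2) *
    ∫ z : EuclideanSpace ℝ (Fin N),
      (|u x - u (x + z)| ^ (p - 2) * (u x - u (x + z)) +
          |u x - u (x - z)| ^ (p - 2) * (u x - u (x - z))) / ‖z‖ ^ ((N : ℝ) + s * p)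

open Metric Set Filter Topology Module
open scoped NNReal

theorem abs_rpow_sub_rpow_le_abs_sub_rpow {q x y : ℝ} (hq0 : 0 ≤ q) (hq1 : q ≤ 1) (hx : 0 ≤ x)
    (hy : 0 ≤ y) : |x ^ q - y ^ q| ≤ |x - y| ^ q := by
  wlog hyx : y ≤ x generalizing x y
  · rw [abs_sub_comm, abs_sub_comm x]
    exact this hy hx (le_of_not_ge hyx)
  have hsub := Real.rpow_add_le_add_rpow (sub_nonneg.2 hyx) hy hq0 hq1
  rw [sub_add_cancel] at hsub
  rw [abs_of_nonneg (sub_nonneg.2 (Real.rpow_le_rpow hy hyx hq0)),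
    abs_of_nonneg (sub_nonneg.2 hyx)]
  linarith

theorem abs_rpow_sub_rpow_le_mul_max {q x y : ℝ} (hq : 1 ≤ q) (hx : 0 ≤ x) (hy : 0 ≤ y) :
    |x ^ q - y ^ q| ≤ q * max x y ^ (q - 1) * |x - y| := by
  have hderiv : ∀ t ∈ Icc 0 (max x y), HasDerivWithinAt (fun t : ℝ => t ^ q) (q * t ^ (q - 1))
      (Icc 0 (max x y)) t :=
    fun t _ => (Real.hasDerivAt_rpow_const (Or.inr hq)).hasDerivWithinAt
  have hbound : ∀ t ∈ Icc 0 (max x y), ‖q * t ^ (q - 1)‖ ≤ q * max x y ^ (q - 1) := by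
    intro t ht
    rw [Real.norm_eq_abs, abs_of_nonneg (by have := Real.rpow_nonneg ht.1 (q - 1); positivity)]
    exact mul_le_mul_of_nonneg_left (Real.rpow_le_rpow ht.1 ht.2 (by linarith)) (by linarith)
  simpa [Real.norm_eq_abs] using
    (convex_Icc 0 (max x y)).norm_image_sub_le_of_norm_hasDerivWithin_le hderiv hbound
      ⟨hy, le_max_right x y⟩ ⟨hx, le_max_left x y⟩

noncomputable def signedPow (p t : ℝ) : ℝ := |t| ^ (p - 2) * t

section SignedPow

variable {p : ℝ}

theorem signedPow_neg (p t : ℝ) : signedPow p (-t) = -signedPow p t := by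
  simp only [signedPow, abs_neg, mul_neg]

theorem signedPow_of_nonneg (hp : p ≠ 1) {t : ℝ} (ht : 0 ≤ t) : signedPow p t = t ^ (p - 1) := by
  rcases ht.eq_or_lt with rfl | ht
  · simp [signedPow, Real.zero_rpow (sub_ne_zero.2 hp)]
  · rw [signedPow, abs_of_pos ht, ← Real.rpow_add_one ht.ne']
    ring_nf

theorem abs_signedPow (hp : p ≠ 1) (t : ℝ) : |signedPow p t| = |t| ^ (p - 1) := by
  rw [← signedPow_of_nonneg hp (abs_nonneg t), signedPow, signedPow, abs_mul, abs_abs,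
    abs_of_nonneg (Real.rpow_nonneg (abs_nonneg t) _)]

theorem continuous_signedPow (hp : 1 < p) : Continuous (signedPow p) := by
  rw [continuous_iff_continuousAt]
  intro t
  rcases eq_or_ne t 0 with rfl | ht
  · have hlim : Tendsto (fun s : ℝ => |s| ^ (p - 1)) (𝓝 0) (𝓝 0) := by
      simpa [Function.comp_def, Real.zero_rpow (sub_pos.2 hp).ne'] using
        ((Real.continuous_rpow_const (sub_pos.2 hp).le).comp continuous_abs).tendsto 0
    rw [ContinuousAt, show signedPow p 0 = 0 by simp [signedPow]]
    exact squeeze_zero_norm (fun s => (abs_signedPow hp.ne' s).le) hlim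
  · exact ((Real.continuousAt_rpow_const _ _ (Or.inl (abs_ne_zero.2 ht))).comp
      continuous_abs.continuousAt).mul continuousAt_id

theorem abs_signedPow_add_signedPow_le_of_abs_le (hp : 1 < p) {a b M : ℝ} (ha : |a| ≤ M)
    (hb : |b| ≤ M) : |signedPow p a + signedPow p b| ≤ 2 * M ^ (p - 1) := by
  have hp' : p ≠ 1 := hp.ne'
  calc |signedPow p a + signedPow p b| ≤ |signedPow p a| + |signedPow p b| := abs_add_le _ _
    _ = |a| ^ (p - 1) + |b| ^ (p - 1) := by rw [abs_signedPow hp', abs_signedPow hp']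
    _ ≤ M ^ (p - 1) + M ^ (p - 1) := by gcongr
    _ = 2 * M ^ (p - 1) := by ring

theorem abs_signedPow_add_signedPow_le_of_le_two (hp : 1 < p) (hp2 : p ≤ 2) (a b : ℝ) :
    |signedPow p a + signedPow p b| ≤ 2 * |a + b| ^ (p - 1) := by
  wlog ha : 0 ≤ a generalizing a b
  · have h := this (-a) (-b) (by linarith)
    rwa [signedPow_neg, signedPow_neg, ← neg_add, abs_neg, ← neg_add, abs_neg] at h
  have hq : 0 ≤ p - 1 := by linarith
  rw [signedPow_of_nonneg hp.ne' ha]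
  rcases le_total 0 b with hb | hb
  · rw [signedPow_of_nonneg hp.ne' hb, abs_of_nonneg (by positivity), abs_of_nonneg (by linarith)]
    have hxa := Real.rpow_le_rpow ha (le_add_of_nonneg_right hb) hq
    have hxb := Real.rpow_le_rpow hb (le_add_of_nonneg_left ha) hq
    linarith
  · obtain ⟨y, hy, rfl⟩ : ∃ y, 0 ≤ y ∧ b = -y := ⟨-b, by linarith, by ring⟩
    rw [signedPow_neg, signedPow_of_nonneg hp.ne' hy, ← sub_eq_add_neg, ← sub_eq_add_neg]
    calc |a ^ (p - 1) - y ^ (p - 1)| ≤ |a - y| ^ (p - 1) :=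
          abs_rpow_sub_rpow_le_abs_sub_rpow hq (by linarith) ha hy
      _ ≤ 2 * |a - y| ^ (p - 1) := le_mul_of_one_le_left (by positivity) one_le_two

theorem abs_signedPow_add_signedPow_le_of_two_le (hp : 2 ≤ p) (a b : ℝ) :
    |signedPow p a + signedPow p b| ≤ (p - 1) * max |a| |b| ^ (p - 2) * |a + b| := by
  wlog ha : 0 ≤ a generalizing a b
  · have h := this (-a) (-b) (by linarith)
    rwa [signedPow_neg, signedPow_neg, ← neg_add, abs_neg, ← neg_add, abs_neg, abs_neg,
      abs_neg] at h
  rcases le_total 0 b with hb | hb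
  · have hle : ∀ t, 0 ≤ t → |t| ≤ max |a| |b| → signedPow p t ≤ max |a| |b| ^ (p - 2) * t :=
      fun t ht htM => mul_le_mul_of_nonneg_right (Real.rpow_le_rpow (abs_nonneg t) htM
        (by linarith)) ht
    have hnn : 0 ≤ signedPow p a + signedPow p b := by
      unfold signedPow
      positivity
    rw [abs_of_nonneg hnn, abs_of_nonneg (add_nonneg ha hb), mul_assoc]
    calc signedPow p a + signedPow p b ≤ max |a| |b| ^ (p - 2) * (a + b) := by
          linarith [hle a ha (le_max_left _ _), hle b hb (le_max_right _ _)]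
      _ ≤ (p - 1) * (max |a| |b| ^ (p - 2) * (a + b)) :=
          le_mul_of_one_le_left (by positivity) (by linarith)
  · obtain ⟨y, hy, rfl⟩ : ∃ y, 0 ≤ y ∧ b = -y := ⟨-b, by linarith, by ring⟩
    rw [signedPow_neg, signedPow_of_nonneg (by linarith) hy, signedPow_of_nonneg (by linarith) ha,
      abs_neg, abs_of_nonneg ha, abs_of_nonneg hy, ← sub_eq_add_neg, ← sub_eq_add_neg]
    have h := abs_rpow_sub_rpow_le_mul_max (q := p - 1) (by linarith) ha hy
    rwa [show p - 1 - 1 = p - 2 by ring] at h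

end SignedPow

section Gradient

variable {F : Type*} [NormedAddCommGroup F] [InnerProductSpace ℝ F] [CompleteSpace F]
  {u : F → ℝ}

theorem abs_sub_le_of_norm_gradient_le (hu : Differentiable ℝ u) {M : ℝ}
    (hM : ∀ x, ‖gradient u x‖ ≤ M) (x y : F) : |u x - u y| ≤ M * ‖x - y‖ := by
  have hfderiv : ∀ w ∈ univ, ‖fderiv ℝ u w‖ ≤ M := fun w _ => by
    rw [← toDual_gradient, LinearIsometryEquiv.norm_map]
    exact hM w
  simpa [Real.norm_eq_abs] using
    convex_univ.norm_image_sub_le_of_norm_fderiv_le (fun w _ => hu w) hfderiv (mem_univ y)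
      (mem_univ x)

theorem abs_second_difference_le (hu : Differentiable ℝ u) {K : ℝ≥0}
    (hK : LipschitzWith K (gradient u)) (x z : F) :
    |(u x - u (x + z)) + (u x - u (x - z))| ≤ 2 * K * ‖z‖ ^ 2 := by
  set G : ℝ → ℝ := fun t => u (x + t • z) + u (x - t • z)
  have hG : ∀ t : ℝ,
      HasDerivAt G (inner ℝ (gradient u (x + t • z) - gradient u (x - t • z)) z) t := by
    intro t
    have hplus : HasDerivAt (fun t : ℝ => x + t • z) z t := by
      simpa using ((hasDerivAt_id t).smul_const z).const_add x
    have hminus : HasDerivAt (fun t : ℝ => x - t • z) (-z) t := by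
      simpa using ((hasDerivAt_id t).smul_const z).const_sub x
    have h := ((hu _).hasFDerivAt.comp_hasDerivAt t hplus).add
      ((hu _).hasFDerivAt.comp_hasDerivAt t hminus)
    rwa [map_neg, ← inner_gradient_left, ← inner_gradient_left, ← sub_eq_add_neg,
      ← inner_sub_left] at h
  have hbound : ∀ t ∈ Icc (0 : ℝ) 1,
      ‖inner ℝ (gradient u (x + t • z) - gradient u (x - t • z)) z‖ ≤ 2 * K * ‖z‖ ^ 2 := by
    intro t ht
    have hlip := hK.norm_sub_le (x + t • z) (x - t • z)
    rw [show x + t • z - (x - t • z) = (2 * t) • z by module, norm_smul, Real.norm_of_nonneg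
      (by linarith [ht.1])] at hlip
    calc ‖inner ℝ (gradient u (x + t • z) - gradient u (x - t • z)) z‖
        ≤ ‖gradient u (x + t • z) - gradient u (x - t • z)‖ * ‖z‖ := norm_inner_le_norm _ _
      _ ≤ K * (2 * t * ‖z‖) * ‖z‖ := by gcongr
      _ ≤ K * (2 * 1 * ‖z‖) * ‖z‖ := by gcongr; exact ht.2
      _ = 2 * K * ‖z‖ ^ 2 := by ring
  have h := (convex_Icc (0 : ℝ) 1).norm_image_sub_le_of_norm_hasDerivWithin_le
    (fun t _ => (hG t).hasDerivWithinAt) hbound (left_mem_Icc.2 zero_le_one)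
    (right_mem_Icc.2 zero_le_one)
  rw [show G 1 - G 0 = -((u x - u (x + z)) + (u x - u (x - z))) by simp [G]; ring] at h
  rwa [norm_neg, Real.norm_eq_abs, sub_zero, norm_one, mul_one] at h

end Gradient

section NormRpow

variable {E : Type*} [NormedAddCommGroup E] [NormedSpace ℝ E] [FiniteDimensional ℝ E]
  [MeasurableSpace E] [BorelSpace E] (μ : Measure E) [μ.IsAddHaarMeasure]

theorem integrableOn_ball_norm_rpow {a : ℝ} (ha : -(finrank ℝ E : ℝ) < a) :
    IntegrableOn (fun x : E => ‖x‖ ^ a) (ball 0 1) μ := by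
  rcases subsingleton_or_nontrivial E with hE | hE
  · have : Finite E := Finite.of_subsingleton
    exact Integrable.of_finite
  have hdim : 1 ≤ finrank ℝ E := finrank_pos
  rw [integrableOn_fun_norm_addHaar μ (f := fun y => y ^ a)]
  refine ((intervalIntegral.integrableOn_Ioo_rpow_iff (s := ((finrank ℝ E - 1 : ℕ) : ℝ) + a)
    one_pos).2 ?_).congr_fun (fun y hy => ?_) measurableSet_Ioo
  · rw [Nat.cast_sub hdim, Nat.cast_one]
    linarith
  · rw [smul_eq_mul, ← Real.rpow_natCast, ← Real.rpow_add hy.1]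

theorem integrableOn_compl_ball_norm_rpow {b : ℝ} (hb : b < -(finrank ℝ E : ℝ)) :
    IntegrableOn (fun x : E => ‖x‖ ^ b) (ball 0 1)ᶜ μ := by
  refine ((integrable_one_add_norm (μ := μ) (r := -b) (by linarith)).const_mul
    (2 ^ (-b))).integrableOn.mono'
    (measurable_norm.pow_const b).aestronglyMeasurable ?_
  filter_upwards [ae_restrict_mem measurableSet_ball.compl] with x hx
  have hx1 : 1 ≤ ‖x‖ := by simpa using hx
  rw [Real.norm_of_nonneg (by positivity), neg_neg]
  calc ‖x‖ ^ b = 2 ^ (-b) * (2 * ‖x‖) ^ b := by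
        rw [Real.mul_rpow zero_le_two (by positivity), ← mul_assoc, ← Real.rpow_add two_pos,
          neg_add_cancel, Real.rpow_zero, one_mul]
    _ ≤ 2 ^ (-b) * (1 + ‖x‖) ^ b := by
        gcongr ?_ * ?_
        exact Real.rpow_le_rpow_of_nonpos (by positivity) (by linarith) (by linarith)

end NormRpow

section Integrand

variable {E : Type*} [NormedAddCommGroup E]

noncomputable def fracPLapNumerator (p : ℝ) (u : E → ℝ) (x z : E) : ℝ :=
  signedPow p (u x - u (x + z)) + signedPow p (u x - u (x - z))

noncomputable def fracPLapIntegrand (p c : ℝ) (u : E → ℝ) (x z : E) : ℝ :=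
  fracPLapNumerator p u x z / ‖z‖ ^ c

variable {p c : ℝ} {u : E → ℝ}

theorem continuous_fracPLapNumerator (hp : 1 < p) (hu : Continuous u) :
    Continuous fun xz : E × E => fracPLapNumerator p u xz.1 xz.2 := by
  unfold fracPLapNumerator
  have := continuous_signedPow hp
  fun_prop

theorem continuous_fracPLapIntegrand_left (hp : 1 < p) (hu : Continuous u) (z : E) :
    Continuous fun x => fracPLapIntegrand p c u x z :=
  ((continuous_fracPLapNumerator hp hu).comp (.prodMk_left z)).div_const _

theorem measurable_fracPLapIntegrand [MeasurableSpace E] [OpensMeasurableSpace E] (hp : 1 < p)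
    (hu : Continuous u) (x : E) : Measurable (fracPLapIntegrand p c u x) :=
  ((continuous_fracPLapNumerator hp hu).comp (.prodMk_right x)).measurable.div
    (measurable_norm.pow_const c)

theorem abs_fracPLapNumerator_le (hp : 1 < p) {M : ℝ} (hM : ∀ x, |u x| ≤ M) (x z : E) :
    |fracPLapNumerator p u x z| ≤ 2 * (2 * M) ^ (p - 1) := by
  have hdiff : ∀ y, |u x - u y| ≤ 2 * M := fun y => by
    linarith [abs_sub (u x) (u y), hM x, hM y]
  exact abs_signedPow_add_signedPow_le_of_abs_le hp (hdiff _) (hdiff _)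

end Integrand

section SecondOrder

variable {F : Type*} [NormedAddCommGroup F] [InnerProductSpace ℝ F] [CompleteSpace F]
  {p : ℝ} {u : F → ℝ} {K : ℝ≥0}

theorem abs_fracPLapNumerator_le_of_le_two (hp : 1 < p) (hp2 : p ≤ 2) (hu : Differentiable ℝ u)
    (hK : LipschitzWith K (gradient u)) (x z : F) :
    |fracPLapNumerator p u x z| ≤ 2 * (2 * K) ^ (p - 1) * ‖z‖ ^ (2 * (p - 1)) := by
  calc |fracPLapNumerator p u x z| ≤ 2 * |(u x - u (x + z)) + (u x - u (x - z))| ^ (p - 1) :=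
        abs_signedPow_add_signedPow_le_of_le_two hp hp2 _ _
    _ ≤ 2 * (2 * K * ‖z‖ ^ 2) ^ (p - 1) := by
        have hsecond := abs_second_difference_le hu hK x z
        gcongr
    _ = 2 * (2 * K) ^ (p - 1) * ‖z‖ ^ (2 * (p - 1)) := by
        rw [Real.mul_rpow (by positivity) (by positivity), ← Real.rpow_natCast,
          ← Real.rpow_mul (norm_nonneg z)]
        push_cast
        ring

theorem abs_fracPLapNumerator_le_of_two_le (hp : 2 ≤ p) (hu : Differentiable ℝ u) {M : ℝ}
    (hM : ∀ x, ‖gradient u x‖ ≤ M) (hK : LipschitzWith K (gradient u)) (x z : F) :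
    |fracPLapNumerator p u x z| ≤ (p - 1) * M ^ (p - 2) * (2 * K) * ‖z‖ ^ p := by
  have hM0 : 0 ≤ M := (norm_nonneg _).trans (hM x)
  have hmax : max |u x - u (x + z)| |u x - u (x - z)| ≤ M * ‖z‖ := by
    refine max_le ?_ ?_
    · simpa using abs_sub_le_of_norm_gradient_le hu hM x (x + z)
    · simpa using abs_sub_le_of_norm_gradient_le hu hM x (x - z)
  calc |fracPLapNumerator p u x z|
      ≤ (p - 1) * max |u x - u (x + z)| |u x - u (x - z)| ^ (p - 2) *
          |(u x - u (x + z)) + (u x - u (x - z))| :=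
        abs_signedPow_add_signedPow_le_of_two_le hp _ _
    _ ≤ (p - 1) * (M * ‖z‖) ^ (p - 2) * (2 * K * ‖z‖ ^ 2) := by
        have hsecond := abs_second_difference_le hu hK x z
        have hp1 : 0 ≤ p - 1 := by linarith
        gcongr
    _ = (p - 1) * M ^ (p - 2) * (2 * K) * (‖z‖ ^ (p - 2) * ‖z‖ ^ (2 : ℝ)) := by
        rw [Real.mul_rpow hM0 (norm_nonneg z), Real.rpow_two]
        ring
    _ = (p - 1) * M ^ (p - 2) * (2 * K) * ‖z‖ ^ p := by
        rw [← Real.rpow_add' (norm_nonneg z) (by linarith), sub_add_cancel]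

theorem exists_abs_fracPLapNumerator_le_rpow (hp : 1 < p) (hu : Differentiable ℝ u) {M : ℝ}
    (hM : ∀ x, ‖gradient u x‖ ≤ M) (hK : LipschitzWith K (gradient u)) :
    ∃ A, 0 ≤ A ∧ ∀ x z, |fracPLapNumerator p u x z| ≤ A * ‖z‖ ^ min p (2 * (p - 1)) := by
  rcases le_total p 2 with hp2 | hp2
  · rw [min_eq_right (by linarith)]
    exact ⟨_, by positivity, abs_fracPLapNumerator_le_of_le_two hp hp2 hu hK⟩
  · have hM0 : 0 ≤ M := (norm_nonneg _).trans (hM 0)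
    have hp1 : 0 ≤ p - 1 := by linarith
    rw [min_eq_left (by linarith)]
    exact ⟨_, by positivity, abs_fracPLapNumerator_le_of_two_le hp2 hu hM hK⟩

end SecondOrder

section Domination

variable {E : Type*} [NormedAddCommGroup E] [DecidablePred (· ∈ ball (0 : E) 1)]

theorem integrable_piecewise_ball_norm_rpow [NormedSpace ℝ E] [FiniteDimensional ℝ E]
    [MeasurableSpace E] [BorelSpace E] (μ : Measure E) [μ.IsAddHaarMeasure] (A B : ℝ) {a b : ℝ}
    (ha : -(finrank ℝ E : ℝ) < a) (hb : b < -(finrank ℝ E : ℝ)) :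
    Integrable ((ball (0 : E) 1).piecewise (fun x => A * ‖x‖ ^ a) (fun x => B * ‖x‖ ^ b)) μ :=
  Integrable.piecewise measurableSet_ball ((integrableOn_ball_norm_rpow μ ha).const_mul A)
    ((integrableOn_compl_ball_norm_rpow μ hb).const_mul B)

theorem abs_div_norm_rpow_le_piecewise {n A B β c : ℝ} {z : E} (hA : 0 ≤ A) (hc : c ≠ 0)
    (hnear : |n| ≤ A * ‖z‖ ^ β) (hfar : |n| ≤ B) :
    |n / ‖z‖ ^ c| ≤
      (ball (0 : E) 1).piecewise (fun x => A * ‖x‖ ^ (β - c)) (fun x => B * ‖x‖ ^ (-c)) z := by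
  rcases eq_or_ne z 0 with rfl | hz
  -- junk values: `‖0‖ ^ c = 0` and `n / 0 = 0`
  · rw [piecewise_eq_of_mem _ _ _ (mem_ball_self one_pos), norm_zero, Real.zero_rpow hc,
      div_zero, abs_zero]
    positivity
  have hz : 0 < ‖z‖ := norm_pos_iff.2 hz
  rw [abs_div, abs_of_pos (Real.rpow_pos_of_pos hz c)]
  by_cases hmem : z ∈ ball (0 : E) 1
  · rw [piecewise_eq_of_mem _ _ _ hmem, Real.rpow_sub hz, ← mul_div_assoc]
    gcongr
  · rw [piecewise_eq_of_notMem _ _ _ hmem, Real.rpow_neg hz.le, ← div_eq_mul_inv]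
    gcongr

end Domination

theorem mul_lt_min_of_lt_two_mul_sub_one_div {s p : ℝ} (hs : s < 1) (hp : 1 < p)
    (hsp : p < 2 → s < 2 * (p - 1) / p) : s * p < min p (2 * (p - 1)) := by
  refine lt_min (by nlinarith) ?_
  rcases lt_or_ge p 2 with hp2 | hp2
  · exact (lt_div_iff₀ (by linarith)).1 (hsp hp2)
  · nlinarith

theorem fracPLap_eq_integral_fracPLapIntegrand (N : ℕ) (s p : ℝ)
    (u : EuclideanSpace ℝ (Fin N) → ℝ) (x : EuclideanSpace ℝ (Fin N)) :
    fracPLap N s p u x = CNsp N s p * (1 / 2) * ∫ z, fracPLapIntegrand p (N + s * p) u x z :=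
  rfl

theorem fracPLap_bounded_continuous_general
    (N : ℕ) (s p : ℝ) (hs : s ∈ Set.Ioo (0 : ℝ) 1) (hp : 1 < p)
    (hsp : p < 2 → s < 2 * (p - 1) / p)
    (u : EuclideanSpace ℝ (Fin N) → ℝ)
    (hu : ContDiff ℝ 1 u)
    (Mu : ℝ) (hMu : ∀ x, |u x| ≤ Mu)
    (Mg : ℝ) (hMg : ∀ x, ‖gradient u x‖ ≤ Mg)
    (K : NNReal) (hK : LipschitzWith K (gradient u)) :
    Continuous (fracPLap N s p u) ∧ ∃ M : ℝ, ∀ x, |fracPLap N s p u x| ≤ M := by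
  classical
  obtain ⟨hs0, hs1⟩ := hs
  have hβ := mul_lt_min_of_lt_two_mul_sub_one_div hs1 hp hsp
  have hsp0 : 0 < s * p := by positivity
  have hdim : (finrank ℝ (EuclideanSpace ℝ (Fin N)) : ℝ) = N := by simp
  obtain ⟨A, hA, hnear⟩ :=
    exists_abs_fracPLapNumerator_le_rpow hp (hu.differentiable one_ne_zero) hMg hK
  set c : ℝ := N + s * p
  set g := (ball (0 : EuclideanSpace ℝ (Fin N)) 1).piecewise
    (fun z => A * ‖z‖ ^ (min p (2 * (p - 1)) - c)) (fun z => 2 * (2 * Mu) ^ (p - 1) * ‖z‖ ^ (-c))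
  have hg : Integrable g :=
    integrable_piecewise_ball_norm_rpow _ _ _ (by rw [hdim]; linarith) (by rw [hdim]; linarith)
  have hbound : ∀ x z, ‖fracPLapIntegrand p c u x z‖ ≤ g z := fun x z =>
    abs_div_norm_rpow_le_piecewise hA (by positivity) (hnear x z)
      (abs_fracPLapNumerator_le hp hMu x z)
  have hcont : Continuous fun x => ∫ z, fracPLapIntegrand p c u x z :=
    continuous_of_dominated
      (fun x => (measurable_fracPLapIntegrand hp hu.continuous x).aestronglyMeasurable)
      (fun x => ae_of_all _ (hbound x)) hg
      (ae_of_all _ (continuous_fracPLapIntegrand_left hp hu.continuous))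
  refine ⟨continuous_const.mul hcont, |CNsp N s p * (1 / 2)| * ∫ z, g z, fun x => ?_⟩
  rw [fracPLap_eq_integral_fracPLapIntegrand, abs_mul]
  exact mul_le_mul_of_nonneg_left (norm_integral_le_of_norm_le hg (ae_of_all _ (hbound x)))
    (abs_nonneg _)

/-- For `u ∈ C^{1,1}(ℝ^N)` (with `s < 2(p-1)/p` when `p < 2`), the function
`x ↦ (−Δ)^s_p u (x)` is bounded and continuous on `ℝ^N`. -/
theorem fracPLap_bounded_continuous
    (N : ℕ) (hN : 1 ≤ N) (s p : ℝ) (hs : s ∈ Set.Ioo (0 : ℝ) 1) (hp : 1 < p)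
    (hsp : p < 2 → s < 2 * (p - 1) / p)
    (u : EuclideanSpace ℝ (Fin N) → ℝ)
    (hu : ContDiff ℝ 1 u)
    (Mu : ℝ) (hMu : ∀ x, |u x| ≤ Mu)
    (Mg : ℝ) (hMg : ∀ x, ‖gradient u x‖ ≤ Mg)
    (K : NNReal) (hK : LipschitzWith K (gradient u)) :
    Continuous (fracPLap N s p u) ∧ ∃ M : ℝ, ∀ x, |fracPLap N s p u x| ≤ M :=
  fracPLap_bounded_continuous_general N s p hs hp hsp u hu Mu hMu Mg hMg K hK
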